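/- (q-Chu–Vandermonde) For a nonnegative integer n, Σ_{j=0}^{n} (a;q)_j (q^{−n};q)_j (c qⁿ/a)^j / ((c;q)_j (q;q)_j) = (c/a;q)ₙ/(c;q)ₙ. -/

import Mathlib

noncomputable section

/-- The field `ℚ(q,a,c)` of rational functions in three variables. -/
abbrev K : Type := FractionRing (MvPolynomial (Fin 3) ℚ)

def q : K := algebraMap (MvPolynomial (Fin 3) ℚ) K (MvPolynomial.X 0)
def a : K := algebraMap (MvPolynomial (Fin 3) ℚ) K (MvPolynomial.X 1)
def c : K := algebraMap (MvPolynomial (Fin 3) ℚ) K (MvPolynomial.X 2)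

/-- The q-Pochhammer symbol `(x;q)_j = ∏_{t=0}^{j−1}(1 − x q^t)`. -/
def qPoch (x : K) (j : ℕ) : K :=
  ∏ t ∈ Finset.range j, (1 - x * q ^ t)

/-!
Induction on `n` by the Wilf–Zeilberger method. Write `t(n, j)` for the `j`-th summand and
`ρₙ = (1 - c qⁿ / a) / (1 - c qⁿ)`. There is a certificate `G(n, j)`, a rational function of
`q^j` times `t(n + 1, j)`, with
  `t(n + 1, j) - ρₙ t(n, j) = G(n, j + 1) - G(n, j)`;
once every term is expressed through `t(n + 1, j)` this is a polynomial identity in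
`q^j, qⁿ, a, c`. As `G(n, 0) = 0` and `G(n, n + 2) = 0` (the factor `(q^{-n-1}; q)_{n+2}`
vanishes), summing over `j` telescopes to `S(n + 1) = ρₙ S(n)` for `S(n) = ∑ⱼ t(n, j)`, the
recursion satisfied by `(c/a; q)ₙ / (c; q)ₙ`.
-/

open Finset

section qPochhammer

variable {F : Type*} [Field F] (q : F)

def qPochhammer (x : F) (j : ℕ) : F :=
  ∏ t ∈ range j, (1 - x * q ^ t)

theorem qPochhammer_succ (x : F) (j : ℕ) :
    qPochhammer q x (j + 1) = qPochhammer q x j * (1 - x * q ^ j) :=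
  prod_range_succ _ _

theorem qPochhammer_succ' (x : F) (j : ℕ) :
    qPochhammer q x (j + 1) = (1 - x) * qPochhammer q (x * q) j := by
  rw [qPochhammer, qPochhammer, prod_range_succ', pow_zero, mul_one, mul_comm]
  exact congrArg _ (prod_congr rfl fun t _ => by ring)

theorem qPochhammer_inv_pow_eq_zero {q : F} (hq : q ≠ 0) {n j : ℕ} (h : n < j) :
    qPochhammer q (q ^ n)⁻¹ j = 0 :=
  prod_eq_zero (mem_range.2 h) (by rw [inv_mul_cancel₀ (pow_ne_zero n hq), sub_self])

theorem qPochhammer_inv_pow_succ {q : F} (hq : q ≠ 0) (n j : ℕ) :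
    qPochhammer q (q ^ (n + 1))⁻¹ j * (1 - (q ^ (n + 1))⁻¹ * q ^ j) =
      (1 - (q ^ (n + 1))⁻¹) * qPochhammer q (q ^ n)⁻¹ j := by
  rw [← qPochhammer_succ, qPochhammer_succ', pow_succ, mul_inv, inv_mul_cancel_right₀ hq]

end qPochhammer

namespace QChuVandermonde

variable {F : Type*} [Field F] (q a c : F)

def term (n j : ℕ) : F :=
  qPochhammer q a j * qPochhammer q (q ^ n)⁻¹ j * (c * q ^ n / a) ^ j /
    (qPochhammer q c j * qPochhammer q q j)

def certificate (n j : ℕ) : F :=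
  term q a c (n + 1) j * (1 - q ^ j) * (q - c * q ^ j) / q ^ j *
    (q ^ n / ((q ^ (n + 1) - 1) * (1 - c * q ^ n)))

variable {q a c}

theorem term_eq_term_succ (hq : q ≠ 0) {n : ℕ} (hn : q ^ (n + 1) ≠ 1) (j : ℕ) :
    term q a c n j =
      term q a c (n + 1) j * (q ^ (n + 1) - q ^ j) / (q ^ j * (q ^ (n + 1) - 1)) := by
  have h := qPochhammer_inv_pow_succ hq n j
  have h1 : 1 - (q ^ (n + 1))⁻¹ ≠ 0 := by
    rw [sub_ne_zero, ne_comm, inv_ne_one]; exact hn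
  simp only [term, (eq_inv_mul_iff_mul_eq₀ h1).2 h.symm]
  rw [pow_succ q n]
  field_simp
  ring

theorem term_succ_succ (n j : ℕ) :
    term q a c (n + 1) (j + 1) = term q a c (n + 1) j *
      (((1 - a * q ^ j) * (1 - (q ^ (n + 1))⁻¹ * q ^ j) * (c * q ^ (n + 1) / a)) /
        ((1 - c * q ^ j) * (1 - q ^ (j + 1)))) := by
  rw [term, term, div_mul_div_comm]
  simp only [qPochhammer_succ, pow_succ (c * q ^ (n + 1) / a) j]
  congr 1 <;> ring

theorem term_eq_zero (hq : q ≠ 0) {n j : ℕ} (h : n < j) : term q a c n j = 0 := by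
  rw [term, qPochhammer_inv_pow_eq_zero hq h, mul_zero, zero_mul, zero_div]

theorem certificate_zero (n : ℕ) : certificate q a c n 0 = 0 := by
  simp [certificate]

theorem certificate_eq_zero (hq : q ≠ 0) {n j : ℕ} (h : n + 1 < j) :
    certificate q a c n j = 0 := by
  rw [certificate, term_eq_zero hq h]
  simp

theorem certificate_succ (hq : q ≠ 0) {j : ℕ} (hqj : q ^ (j + 1) ≠ 1)
    (hcj : c * q ^ j ≠ 1) (n : ℕ) :
    certificate q a c n (j + 1) =
      term q a c (n + 1) j * c * (1 - a * q ^ j) * (q ^ (n + 1) - q ^ j) / (a * q ^ j) *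
        (q ^ n / ((q ^ (n + 1) - 1) * (1 - c * q ^ n))) := by
  have hfactor : q - c * q ^ (j + 1) = q * (1 - c * q ^ j) := by ring
  rw [certificate, term_succ_succ, hfactor]
  congr 1
  have hu : q ^ j ≠ 0 := pow_ne_zero j hq
  generalize hs : 1 - c * q ^ j = s
  generalize ht : 1 - q ^ (j + 1) = t
  have hs0 : s ≠ 0 := hs ▸ sub_ne_zero.2 hcj.symm
  have ht0 : t ≠ 0 := ht ▸ sub_ne_zero.2 hqj.symm
  field_simp
  ring

theorem term_succ_sub_mul_term (ha : a ≠ 0) (hq : q ≠ 0) {n j : ℕ} (hqn : q ^ (n + 1) ≠ 1)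
    (hqj : q ^ (j + 1) ≠ 1) (hcn : c * q ^ n ≠ 1) (hcj : c * q ^ j ≠ 1) :
    term q a c (n + 1) j - (1 - c / a * q ^ n) / (1 - c * q ^ n) * term q a c n j =
      certificate q a c n (j + 1) - certificate q a c n j := by
  have hu : q ^ j ≠ 0 := pow_ne_zero j hq
  have hqn' := sub_ne_zero.2 hqn
  have hcn' := sub_ne_zero.2 hcn.symm
  rw [certificate_succ hq hqj hcj, certificate, term_eq_term_succ hq hqn]
  field_simp
  ring

theorem sum_range_term (ha : a ≠ 0) (hq : q ≠ 0) (hq_pow : ∀ k : ℕ, q ^ (k + 1) ≠ 1)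
    (hcq_pow : ∀ k : ℕ, c * q ^ k ≠ 1) (n : ℕ) :
    ∑ j ∈ range (n + 1), term q a c n j = qPochhammer q (c / a) n / qPochhammer q c n := by
  induction n with
  | zero => simp [term, qPochhammer]
  | succ n ih =>
    set ρ := (1 - c / a * q ^ n) / (1 - c * q ^ n) with hρ
    have hstep (j : ℕ) : term q a c (n + 1) j =
        ρ * term q a c n j + (certificate q a c n (j + 1) - certificate q a c n j) := by
      rw [← term_succ_sub_mul_term ha hq (hq_pow n) (hq_pow j) (hcq_pow n) (hcq_pow j)]
      ring
    calc ∑ j ∈ range (n + 2), term q a c (n + 1) j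
        = ρ * ∑ j ∈ range (n + 2), term q a c n j +
            (certificate q a c n (n + 2) - certificate q a c n 0) := by
          rw [sum_congr rfl fun j _ => hstep j, sum_add_distrib, mul_sum, sum_range_sub]
      _ = ρ * (qPochhammer q (c / a) n / qPochhammer q c n) := by
          rw [sum_range_succ, term_eq_zero hq n.lt_succ_self, add_zero, ih, certificate_zero,
            certificate_eq_zero hq (n + 1).lt_succ_self, sub_zero, add_zero]
      _ = qPochhammer q (c / a) (n + 1) / qPochhammer q c (n + 1) := by
          rw [hρ, div_mul_div_comm, qPochhammer_succ, qPochhammer_succ,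
            mul_comm (1 - c / a * q ^ n), mul_comm (1 - c * q ^ n)]

end QChuVandermonde

theorem MvPolynomial.algebraMap_ne_of_eval_ne {σ R L : Type*} [CommRing R] [CommRing L]
    [Algebra (MvPolynomial σ R) L] [IsFractionRing (MvPolynomial σ R) L]
    {p p' : MvPolynomial σ R} (x : σ → R) (h : eval x p ≠ eval x p') :
    algebraMap (MvPolynomial σ R) L p ≠ algebraMap (MvPolynomial σ R) L p' :=
  fun hpp' => h (congrArg (eval x) (IsFractionRing.injective _ L hpp'))

theorem q_ne_zero : q ≠ 0 := by
  simp [q]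

theorem a_ne_zero : a ≠ 0 := by
  simp [a]

theorem q_pow_succ_ne_one (k : ℕ) : q ^ (k + 1) ≠ 1 := by
  simpa [q] using MvPolynomial.algebraMap_ne_of_eval_ne (L := K) (p := .X 0 ^ (k + 1)) (p' := 1)
    ![2, 1, 0] (by simpa using (one_lt_pow₀ one_lt_two k.succ_ne_zero).ne')

theorem c_mul_q_pow_ne_one (k : ℕ) : c * q ^ k ≠ 1 := by
  simpa [q, c] using MvPolynomial.algebraMap_ne_of_eval_ne (L := K) (p := .X 2 * .X 0 ^ k)
    (p' := 1) ![2, 1, 0] (by simp)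

/-- q-Chu–Vandermonde:
`Σ_{j=0}^{n} (a;q)_j (q^{−n};q)_j (c qⁿ/a)^j / ((c;q)_j (q;q)_j)
  = (c/a;q)ₙ / (c;q)ₙ`. -/
theorem q_chu_vandermonde (n : ℕ) :
    ∑ j ∈ Finset.range (n + 1),
      qPoch a j * qPoch (q ^ (-(n : ℤ))) j * (c * q ^ n / a) ^ j /
        (qPoch c j * qPoch q j) =
    qPoch (c / a) n / qPoch c n := by
  rw [zpow_neg, zpow_natCast]
  exact QChuVandermonde.sum_range_term a_ne_zero q_ne_zero q_pow_succ_ne_one c_mul_q_pow_ne_one n
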